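/- Let R be a commutative ring, δ ∈ R, and let c = [[0,0,1],[0,δ,0],[δ²,0,0]] ∈ Mat₃(R). Then the centralizer of c in Mat₃(R) equals the set of matrices of the form [[a, x, z], [δy, b, y], [δ²z, δx, a]] with a, b, x, y, z ∈ R. -/
import Mathlib

open Matrix

theorem centralizer_of_c (R : Type*) [CommRing R] (δ : R)
    (c : Matrix (Fin 3) (Fin 3) R) (hc : c = !![0, 0, 1; 0, δ, 0; δ ^ 2, 0, 0]) :
    {X : Matrix (Fin 3) (Fin 3) R | X * c = c * X} =
      {X | ∃ a b x y z : R,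
        X = !![a, x, z; δ * y, b, y; δ ^ 2 * z, δ * x, a]} := by
  subst hc
  ext X
  simp only [Set.mem_setOf_eq]
  constructor
  · intro h
    have e00 := congrFun (congrFun h 0) 0
    have e01 := congrFun (congrFun h 0) 1
    have e02 := congrFun (congrFun h 0) 2
    have e12 := congrFun (congrFun h 1) 2
    simp [Matrix.mul_apply, Fin.sum_univ_three, Matrix.vecHead, Matrix.vecTail] at e00 e01 e02 e12
    refine ⟨X 0 0, X 1 1, X 0 1, X 1 2, X 0 2, ?_⟩
    ext i j
    fin_cases i <;> fin_cases j <;>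
      simp [Matrix.vecHead, Matrix.vecTail] <;>
      first
        | rfl
        | linear_combination e12
        | linear_combination e00
        | linear_combination e01
        | linear_combination e02
        | linear_combination -e00
        | linear_combination -e01
        | linear_combination -e02

  · rintro ⟨a, b, x, y, z, rfl⟩
    ext i j
    fin_cases i <;> fin_cases j <;>
      simp [Matrix.mul_apply, Fin.sum_univ_three, Matrix.vecHead, Matrix.vecTail] <;> ring
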